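/- arXiv:2009.14188 — 4 statements merged into one kernel-verified Lean document; each statement's English description precedes it below -/
import Mathlib

section
/- Let H₁ and H₂ be complex Hilbert spaces and let A : H₁ → H₁, B : H₂ → H₁, C : H₁ → H₂, and D, Z : H₂ → H₂ be bounded linear operators. Assume that 1 − ZD is invertible, set Φ = A + B(1 − ZD)⁻¹ZC (a bounded operator on H₁), and assume that 1 − Φ is invertible. Let M = [A, B; ZC, ZD] be the block operator on H₁ ⊕ H₂. Then 1 − M is invertible and (1 − Φ)⁻¹(1 + Φ) = P₁ ∘ (1 − M)⁻¹ ∘ (1 + M) ∘ ι₁, where ι₁ : H₁ → H₁ ⊕ H₂ is the inclusion x ↦ (x, 0) and P₁ : H₁ ⊕ H₂ → H₁ is the projection (x, y) ↦ x. -/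
open ContinuousLinearMap

variable {H₁ H₂ : Type*}
  [NormedAddCommGroup H₁] [InnerProductSpace ℂ H₁] [CompleteSpace H₁]
  [NormedAddCommGroup H₂] [InnerProductSpace ℂ H₂] [CompleteSpace H₂]

/-- The block operator `[A, B; C, D]` on `H₁ ⊕ H₂`, sending `(x, y)` to
`(A x + B y, C x + D y)`. -/
noncomputable def blockOp (A : H₁ →L[ℂ] H₁) (B : H₂ →L[ℂ] H₁)
    (C : H₁ →L[ℂ] H₂) (D : H₂ →L[ℂ] H₂) : (H₁ × H₂) →L[ℂ] (H₁ × H₂) :=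
  (A.comp (ContinuousLinearMap.fst ℂ H₁ H₂) + B.comp (ContinuousLinearMap.snd ℂ H₁ H₂)).prod
    (C.comp (ContinuousLinearMap.fst ℂ H₁ H₂) + D.comp (ContinuousLinearMap.snd ℂ H₁ H₂))

/-!
Write `1 - M = [1 - A, -B; -ZC, 1 - ZD]`. The Schur complement of its invertible corner
`1 - ZD` is exactly `1 - Φ`, so `1 - M` is invertible and the upper-left corner of its inverse
is `(1 - Φ)⁻¹`. Since `(1 - X)⁻¹ (1 + X) = 2 (1 - X)⁻¹ - 1` for both `X = Φ` and `X = M`,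
compressing to `H₁` leaves exactly that corner.
-/

theorem Ring.inverse_one_sub_mul_one_add {α : Type*} [Ring α] {x : α} (hx : IsUnit (1 - x)) :
    Ring.inverse (1 - x) * (1 + x) = 2 • Ring.inverse (1 - x) - 1 := by
  have h : 1 + x = 2 • 1 - (1 - x) := by rw [two_nsmul]; abel
  rw [h, mul_sub, Ring.inverse_mul_cancel _ hx, mul_smul_comm, mul_one]

namespace ContinuousLinearMap

theorem apply_inverse_apply {R M : Type*} [Semiring R] [TopologicalSpace M] [AddCommMonoid M]
    [Module R M] {T : M →L[R] M} (hT : IsUnit T) (x : M) : T (Ring.inverse T x) = x := by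
  rw [← mul_apply_eq_comp, Ring.mul_inverse_cancel _ hT, one_apply_eq_self]

theorem inverse_apply_apply {R M : Type*} [Semiring R] [TopologicalSpace M] [AddCommMonoid M]
    [Module R M] {T : M →L[R] M} (hT : IsUnit T) (x : M) : Ring.inverse T (T x) = x := by
  rw [← mul_apply_eq_comp, Ring.inverse_mul_cancel _ hT, one_apply_eq_self]

end ContinuousLinearMap

section SchurComplement

variable {E F : Type*} [NormedAddCommGroup E] [InnerProductSpace ℂ E]
  [NormedAddCommGroup F] [InnerProductSpace ℂ F]

@[simp]
theorem blockOp_apply (A : E →L[ℂ] E) (B : F →L[ℂ] E) (C : E →L[ℂ] F) (D : F →L[ℂ] F)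
    (x : E × F) : blockOp A B C D x = (A x.1 + B x.2, C x.1 + D x.2) :=
  rfl

theorem one_sub_blockOp (A : E →L[ℂ] E) (B : F →L[ℂ] E) (C : E →L[ℂ] F) (D : F →L[ℂ] F) :
    1 - blockOp A B C D = blockOp (1 - A) (-B) (-C) (1 - D) := by
  ext x <;> simp

noncomputable def schurComplement (P : E →L[ℂ] E) (Q : F →L[ℂ] E) (R : E →L[ℂ] F)
    (S : F →L[ℂ] F) : E →L[ℂ] E :=
  P - Q ∘L Ring.inverse S ∘L R

/- Solving `blockOp P Q R S (u, v) = (x, y)`: the second row gives `v = S⁻¹ (y - R u)`, and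
substituting into the first leaves `schurComplement P Q R S u = x - Q S⁻¹ y`. -/
noncomputable def blockOpSchurInv (P : E →L[ℂ] E) (Q : F →L[ℂ] E) (R : E →L[ℂ] F)
    (S : F →L[ℂ] F) : E × F →L[ℂ] E × F :=
  let U := Ring.inverse (schurComplement P Q R S) ∘L
    (fst ℂ E F - Q ∘L Ring.inverse S ∘L snd ℂ E F)
  U.prod (Ring.inverse S ∘L (snd ℂ E F - R ∘L U))

variable {P : E →L[ℂ] E} {Q : F →L[ℂ] E} {R : E →L[ℂ] F} {S : F →L[ℂ] F}

theorem blockOpSchurInv_apply (x : E) (y : F) :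
    blockOpSchurInv P Q R S (x, y) =
      let u := Ring.inverse (schurComplement P Q R S) (x - Q (Ring.inverse S y))
      (u, Ring.inverse S (y - R u)) :=
  rfl

theorem blockOp_mul_blockOpSchurInv (hS : IsUnit S) (hT : IsUnit (schurComplement P Q R S)) :
    blockOp P Q R S * blockOpSchurInv P Q R S = 1 := by
  refine ContinuousLinearMap.ext fun ⟨x, y⟩ => ?_
  rw [mul_apply_eq_comp, blockOpSchurInv_apply, one_apply_eq_self]
  dsimp only
  set u := Ring.inverse (schurComplement P Q R S) (x - Q (Ring.inverse S y))
  have hu : P u - Q (Ring.inverse S (R u)) = x - Q (Ring.inverse S y) := apply_inverse_apply hT _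
  refine Prod.ext ?_ ?_
  · show P u + Q (Ring.inverse S (y - R u)) = x
    rw [map_sub, map_sub]
    linear_combination (norm := abel) hu
  · show R u + S (Ring.inverse S (y - R u)) = y
    rw [apply_inverse_apply hS, add_sub_cancel]

theorem blockOpSchurInv_mul_blockOp (hS : IsUnit S) (hT : IsUnit (schurComplement P Q R S)) :
    blockOpSchurInv P Q R S * blockOp P Q R S = 1 := by
  refine ContinuousLinearMap.ext fun ⟨u, v⟩ => ?_
  have hfst : P u + Q v - Q (Ring.inverse S (R u + S v)) = schurComplement P Q R S u := by
    rw [map_add, inverse_apply_apply hS, map_add]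
    simp [schurComplement]
  rw [mul_apply_eq_comp, blockOp_apply, blockOpSchurInv_apply]
  simp only [hfst, inverse_apply_apply hT, add_sub_cancel_left, inverse_apply_apply hS,
    one_apply_eq_self]

theorem isUnit_blockOp (hS : IsUnit S) (hT : IsUnit (schurComplement P Q R S)) :
    IsUnit (blockOp P Q R S) :=
  ⟨⟨_, _, blockOp_mul_blockOpSchurInv hS hT, blockOpSchurInv_mul_blockOp hS hT⟩, rfl⟩

theorem inverse_blockOp (hS : IsUnit S) (hT : IsUnit (schurComplement P Q R S)) :
    Ring.inverse (blockOp P Q R S) = blockOpSchurInv P Q R S :=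
  Ring.inverse_unit ⟨_, _, blockOp_mul_blockOpSchurInv hS hT, blockOpSchurInv_mul_blockOp hS hT⟩

theorem fst_comp_inverse_blockOp_comp_inl (hS : IsUnit S)
    (hT : IsUnit (schurComplement P Q R S)) :
    fst ℂ E F ∘L Ring.inverse (blockOp P Q R S) ∘L inl ℂ E F =
      Ring.inverse (schurComplement P Q R S) := by
  rw [inverse_blockOp hS hT]
  ext x
  simp [blockOpSchurInv_apply]

end SchurComplement

theorem schur_to_herglotz
    (A : H₁ →L[ℂ] H₁) (B : H₂ →L[ℂ] H₁) (C : H₁ →L[ℂ] H₂) (D Z : H₂ →L[ℂ] H₂)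
    (hZD : IsUnit (1 - Z ∘L D))
    (Φ : H₁ →L[ℂ] H₁)
    (hΦdef : Φ = A + B ∘L (Ring.inverse (1 - Z ∘L D)) ∘L Z ∘L C)
    (hΦ : IsUnit (1 - Φ))
    (M : (H₁ × H₂) →L[ℂ] (H₁ × H₂))
    (hMdef : M = blockOp A B (Z ∘L C) (Z ∘L D)) :
    IsUnit (1 - M) ∧
      (Ring.inverse (1 - Φ)) ∘L (1 + Φ) =
        (ContinuousLinearMap.fst ℂ H₁ H₂) ∘L (Ring.inverse (1 - M)) ∘L (1 + M) ∘L
          (ContinuousLinearMap.inl ℂ H₁ H₂) := by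
  have hM : 1 - M = blockOp (1 - A) (-B) (-(Z ∘L C)) (1 - Z ∘L D) := by
    rw [hMdef, one_sub_blockOp]
  have hschur : schurComplement (1 - A) (-B) (-(Z ∘L C)) (1 - Z ∘L D) = 1 - Φ := by
    simp only [schurComplement, hΦdef, comp_neg, neg_comp, neg_neg, sub_sub]
  have hT : IsUnit (schurComplement (1 - A) (-B) (-(Z ∘L C)) (1 - Z ∘L D)) := hschur ▸ hΦ
  have hunit : IsUnit (1 - M) := hM ▸ isUnit_blockOp hZD hT
  have hcorner : fst ℂ H₁ H₂ ∘L Ring.inverse (1 - M) ∘L inl ℂ H₁ H₂ = Ring.inverse (1 - Φ) := by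
    rw [hM, fst_comp_inverse_blockOp_comp_inl hZD hT, hschur]
  refine ⟨hunit, ?_⟩
  calc Ring.inverse (1 - Φ) ∘L (1 + Φ) = 2 • Ring.inverse (1 - Φ) - 1 :=
        Ring.inverse_one_sub_mul_one_add hΦ
    _ = fst ℂ H₁ H₂ ∘L (2 • Ring.inverse (1 - M) - 1) ∘L inl ℂ H₁ H₂ := by
        rw [sub_comp, comp_sub, smul_comp, comp_smul, hcorner, one_def (M₁ := H₁ × H₂), id_comp,
          fst_comp_inl, one_def]
    _ = fst ℂ H₁ H₂ ∘L Ring.inverse (1 - M) ∘L (1 + M) ∘L inl ℂ H₁ H₂ := by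
        rw [← Ring.inverse_one_sub_mul_one_add hunit, mul_def, comp_assoc]
end

section
/- Let H₁ and H₂ be complex Hilbert spaces, let U = [A, B; C, D] be a block operator on H₁ ⊕ H₂ (with A : H₁ → H₁, B : H₂ → H₁, C : H₁ → H₂, D : H₂ → H₂ bounded) such that 1 − U is invertible, and let Z : H₂ → H₂ be a bounded operator such that 1 − Z is invertible and such that the block operator M = [A, B; ZC, ZD] on H₁ ⊕ H₂ has 1 − M invertible; define Θ = P₁ ∘ (1 − M)⁻¹ ∘ (1 + M) ∘ ι₁ : H₁ → H₁. Let W = i(1 + Z)(1 − Z)⁻¹, let T = i(1 + U)(1 − U)⁻¹ with block decomposition T = [T₁₁, T₁₂; T₂₁, T₂₂] on H₁ ⊕ H₂, and let Ψ = iΘ. Then the operator W + T₂₂ on H₂ is invertible and Ψ = T₁₁ − T₁₂(W + T₂₂)⁻¹T₂₁. -/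
/-!
With `T = i(1 + U)(1 - U)⁻¹`, the graph of `T` is `{((1 - U) f, i (f + U f))}`, and likewise
for `W` and `Z`. Given `x`, solve `(1 - M) f = (x, 0)` and put `y = ((1 - U) f)₂`. Since `M f`
is `U f` with `Z` applied to the second coordinate, `(1 - U) f = (x, y)` and
`W y = -(T (x, y))₂`, so `(W + T₂₂) y = -T₂₁ x`, while
`(T (x, y))₁ = i (f₁ + (U f)₁) = (i(1 + M)(1 - M)⁻¹ (x, 0))₁ = Ψ x`.
The same computation shows that a vector killed by `W + T₂₂` comes from a fixed point of `M`,
and that `(1 - M)⁻¹` produces preimages under `W + T₂₂`, so `W + T₂₂` is bijective, hence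
invertible by the open mapping theorem.
-/

open ContinuousLinearMap

variable {H₁ H₂ : Type*}
  [NormedAddCommGroup H₁] [InnerProductSpace ℂ H₁] [CompleteSpace H₁]
  [NormedAddCommGroup H₂] [InnerProductSpace ℂ H₂] [CompleteSpace H₂]

open Complex

noncomputable def cayley {E : Type*} [NormedAddCommGroup E] [NormedSpace ℂ E] (U : E →L[ℂ] E) :
    E →L[ℂ] E :=
  I • ((1 + U) * Ring.inverse (1 - U))

section Cayley

variable {E : Type*} [NormedAddCommGroup E] [NormedSpace ℂ E] {U : E →L[ℂ] E}

theorem bijective_of_isUnit {T : E →L[ℂ] E} (hT : IsUnit T) : Function.Bijective T := by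
  obtain ⟨u, rfl⟩ := hT
  exact (ContinuousLinearEquiv.unitsEquiv ℂ E u).bijective

theorem cayley_apply_sub_apply (hU : IsUnit (1 - U)) (f : E) :
    cayley U (f - U f) = I • (f + U f) := by
  have h : (1 + U) * Ring.inverse (1 - U) * (1 - U) = 1 + U := by
    rw [mul_assoc, Ring.inverse_mul_cancel _ hU, mul_one]
  simpa [cayley] using congr(I • $h f)

theorem cayley_eq_smul_inverse_mul (hU : IsUnit (1 - U)) :
    cayley U = I • (Ring.inverse (1 - U) * (1 + U)) := by
  obtain ⟨u, hu⟩ := hU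
  have hc : Commute (u : E →L[ℂ] E) (1 + U) := by
    rw [hu, Commute, SemiconjBy]; noncomm_ring
  rw [cayley, ← hu, Ring.inverse_unit, hc.units_inv_left.eq]

end Cayley

section Feedback

variable {E₁ E₂ : Type*} [NormedAddCommGroup E₁] [NormedSpace ℂ E₁]
  [NormedAddCommGroup E₂] [NormedSpace ℂ E₂] {U M : (E₁ × E₂) →L[ℂ] (E₁ × E₂)} {Z : E₂ →L[ℂ] E₂}

theorem snd_cayley_add_cayley_snd (hU : IsUnit (1 - U)) (hZ : IsUnit (1 - Z)) {f : E₁ × E₂}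
    {r : E₂} (hf : f.2 - Z (U f).2 = r - Z r) :
    (cayley U (f - U f)).2 + cayley Z (f - U f).2 = (2 * I) • r := by
  have hy : (f - U f).2 = (r - (U f).2) - Z (r - (U f).2) := by
    simp only [Prod.snd_sub, map_sub]; linear_combination (norm := module) hf
  rw [cayley_apply_sub_apply hU, hy, cayley_apply_sub_apply hZ]
  simp only [Prod.smul_snd, Prod.snd_add, map_sub]
  linear_combination (norm := module) I • hf

theorem injective_cayley_add_snd_cayley_inr (hU : IsUnit (1 - U)) (hZ : IsUnit (1 - Z))
    (hM : IsUnit (1 - M)) (hMU : ∀ f, M f = ((U f).1, Z (U f).2)) :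
    Function.Injective (cayley Z + snd ℂ E₁ E₂ ∘L cayley U ∘L inr ℂ E₁ E₂) := by
  refine (injective_iff_map_eq_zero _).2 fun y hy ↦ ?_
  obtain ⟨f, hf⟩ := (bijective_of_isUnit hU).2 (0, y)
  obtain ⟨r, hr⟩ := (bijective_of_isUnit hZ).2 (f.2 - Z (U f).2)
  simp only [sub_apply, one_apply_eq_self] at hf hr
  have hr0 : r = 0 := by
    have := snd_cayley_add_cayley_snd hU hZ hr.symm
    rw [hf] at this
    have hy' : (cayley Z) y + ((cayley U) (0, y)).2 = 0 := by simpa using hy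
    simpa [add_comm, hy', I_ne_zero] using this.symm
  have hMf : f - M f = 0 := by
    have h1 := congr(Prod.fst $hf)
    have h2 : f.2 = Z (U f).2 := sub_eq_zero.1 (by simpa [hr0] using hr.symm)
    simp only [Prod.fst_sub, sub_eq_zero] at h1
    rw [hMU, ← h1, ← h2, sub_self]
  have hf0 : f = 0 := (bijective_of_isUnit hM).1 (by simpa using hMf)
  simpa [hf0] using congr(Prod.snd $hf).symm

theorem apply_mk_eq_add (T : (E₁ × E₂) →L[ℂ] (E₁ × E₂)) (x : E₁) (y : E₂) :
    T (x, y) = T (x, 0) + T (0, y) := by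
  rw [← map_add, Prod.mk_add_mk, add_zero, zero_add]

theorem cayley_blocks_apply_of_sub_apply_eq (hU : IsUnit (1 - U)) (hZ : IsUnit (1 - Z))
    (hMU : ∀ f, M f = ((U f).1, Z (U f).2)) {f : E₁ × E₂} {x : E₁} {r : E₂}
    (hf : f - M f = (x, r - Z r)) :
    (fst ℂ E₁ E₂ ∘L cayley U ∘L inl ℂ E₁ E₂) x
        + (fst ℂ E₁ E₂ ∘L cayley U ∘L inr ℂ E₁ E₂) (f - U f).2 = I • (f.1 + (U f).1) ∧
      (snd ℂ E₁ E₂ ∘L cayley U ∘L inl ℂ E₁ E₂) x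
        + (cayley Z + snd ℂ E₁ E₂ ∘L cayley U ∘L inr ℂ E₁ E₂) (f - U f).2 = (2 * I) • r := by
  rw [hMU] at hf
  have hfU : f - U f = (x, (f - U f).2) := Prod.ext congr(Prod.fst $hf) rfl
  have hgraph := cayley_apply_sub_apply hU f
  have hsnd := snd_cayley_add_cayley_snd hU hZ (f := f) congr(Prod.snd $hf)
  rw [hfU, apply_mk_eq_add] at hgraph hsnd
  constructor
  · simpa using congr(Prod.fst $hgraph)
  · simp only [comp_apply, add_apply, inl_apply, inr_apply, coe_snd', Prod.snd_add] at hsnd ⊢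
    rw [← hsnd]; abel

theorem isUnit_cayley_add_snd_cayley_inr [CompleteSpace E₂] (hU : IsUnit (1 - U))
    (hZ : IsUnit (1 - Z)) (hM : IsUnit (1 - M)) (hMU : ∀ f, M f = ((U f).1, Z (U f).2)) :
    IsUnit (cayley Z + snd ℂ E₁ E₂ ∘L cayley U ∘L inr ℂ E₁ E₂) := by
  refine isUnit_iff_bijective.2 ⟨injective_cayley_add_snd_cayley_inr hU hZ hM hMU, fun z ↦ ?_⟩
  set r := (2 * I)⁻¹ • z
  obtain ⟨f, hf⟩ := (bijective_of_isUnit hM).2 (0, r - Z r)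
  simp only [sub_apply, one_apply_eq_self] at hf
  refine ⟨(f - U f).2, ?_⟩
  have h := (cayley_blocks_apply_of_sub_apply_eq hU hZ hMU hf).2
  rwa [map_zero, zero_add, smul_smul, mul_inv_cancel₀ (by simp [I_ne_zero]), one_smul] at h

theorem fst_cayley_inl_eq_schur (hU : IsUnit (1 - U)) (hZ : IsUnit (1 - Z))
    (hM : IsUnit (1 - M)) (hMU : ∀ f, M f = ((U f).1, Z (U f).2))
    (hS : IsUnit (cayley Z + snd ℂ E₁ E₂ ∘L cayley U ∘L inr ℂ E₁ E₂)) :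
    fst ℂ E₁ E₂ ∘L cayley M ∘L inl ℂ E₁ E₂ = fst ℂ E₁ E₂ ∘L cayley U ∘L inl ℂ E₁ E₂ -
      (fst ℂ E₁ E₂ ∘L cayley U ∘L inr ℂ E₁ E₂) ∘L
        Ring.inverse (cayley Z + snd ℂ E₁ E₂ ∘L cayley U ∘L inr ℂ E₁ E₂) ∘L
          (snd ℂ E₁ E₂ ∘L cayley U ∘L inl ℂ E₁ E₂) := by
  ext x
  obtain ⟨f, hf⟩ := (bijective_of_isUnit hM).2 (x, 0)
  simp only [sub_apply, one_apply_eq_self] at hf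
  obtain ⟨hfst, hsnd⟩ := cayley_blocks_apply_of_sub_apply_eq hU hZ hMU (r := 0) (by simpa using hf)
  have hy : (f - U f).2 = -Ring.inverse (cayley Z + snd ℂ E₁ E₂ ∘L cayley U ∘L inr ℂ E₁ E₂)
      ((snd ℂ E₁ E₂ ∘L cayley U ∘L inl ℂ E₁ E₂) x) := by
    refine (bijective_of_isUnit hS).1 ?_
    rw [map_neg, ← mul_apply_eq_comp, Ring.mul_inverse_cancel _ hS, one_apply_eq_self,
      eq_neg_iff_add_eq_zero, add_comm, hsnd, smul_zero]
  have hgraph := cayley_apply_sub_apply hM f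
  rw [hf] at hgraph
  calc (fst ℂ E₁ E₂ ∘L cayley M ∘L inl ℂ E₁ E₂) x = I • (f.1 + (U f).1) := by simp [hgraph, hMU]
    _ = _ := by rw [← hfst, hy, map_neg, ← sub_eq_add_neg]; rfl

end Feedback

theorem herglotz_to_nevanlinna
    (A : H₁ →L[ℂ] H₁) (B : H₂ →L[ℂ] H₁) (C : H₁ →L[ℂ] H₂) (D : H₂ →L[ℂ] H₂)
    (U : (H₁ × H₂) →L[ℂ] (H₁ × H₂)) (hUdef : U = blockOp A B C D)
    (hU : IsUnit (1 - U))
    (Z : H₂ →L[ℂ] H₂) (hZ : IsUnit (1 - Z))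
    (M : (H₁ × H₂) →L[ℂ] (H₁ × H₂)) (hMdef : M = blockOp A B (Z ∘L C) (Z ∘L D))
    (hM : IsUnit (1 - M))
    (Θ : H₁ →L[ℂ] H₁)
    (hΘdef : Θ = (ContinuousLinearMap.fst ℂ H₁ H₂) ∘L (Ring.inverse (1 - M)) ∘L (1 + M) ∘L
      (ContinuousLinearMap.inl ℂ H₁ H₂))
    (W : H₂ →L[ℂ] H₂) (hWdef : W = Complex.I • ((1 + Z) * Ring.inverse (1 - Z)))
    (T : (H₁ × H₂) →L[ℂ] (H₁ × H₂))
    (hTdef : T = Complex.I • ((1 + U) * Ring.inverse (1 - U)))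
    (T₁₁ : H₁ →L[ℂ] H₁)
    (hT₁₁ : T₁₁ = (ContinuousLinearMap.fst ℂ H₁ H₂) ∘L T ∘L (ContinuousLinearMap.inl ℂ H₁ H₂))
    (T₁₂ : H₂ →L[ℂ] H₁)
    (hT₁₂ : T₁₂ = (ContinuousLinearMap.fst ℂ H₁ H₂) ∘L T ∘L (ContinuousLinearMap.inr ℂ H₁ H₂))
    (T₂₁ : H₁ →L[ℂ] H₂)
    (hT₂₁ : T₂₁ = (ContinuousLinearMap.snd ℂ H₁ H₂) ∘L T ∘L (ContinuousLinearMap.inl ℂ H₁ H₂))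
    (T₂₂ : H₂ →L[ℂ] H₂)
    (hT₂₂ : T₂₂ = (ContinuousLinearMap.snd ℂ H₁ H₂) ∘L T ∘L (ContinuousLinearMap.inr ℂ H₁ H₂))
    (Ψ : H₁ →L[ℂ] H₁) (hΨdef : Ψ = Complex.I • Θ) :
    IsUnit (W + T₂₂) ∧ Ψ = T₁₁ - T₁₂ ∘L (Ring.inverse (W + T₂₂)) ∘L T₂₁ := by
  have hMU : ∀ f, M f = ((U f).1, Z (U f).2) := by
    subst hUdef hMdef
    intro f
    simp [blockOp]
  have hΨ : Ψ = fst ℂ H₁ H₂ ∘L cayley M ∘L inl ℂ H₁ H₂ := by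
    rw [hΨdef, hΘdef, cayley_eq_smul_inverse_mul hM]
    ext x
    simp
  subst hWdef hTdef hT₁₁ hT₁₂ hT₂₁ hT₂₂
  have hS := isUnit_cayley_add_snd_cayley_inr hU hZ hM hMU
  exact ⟨hS, hΨ.trans (fst_cayley_inl_eq_schur hU hZ hM hMU hS)⟩
end

section
/- Let H be a complex Hilbert space, let S : H → H be a linear isometry (‖Sx‖ = ‖x‖ for all x), let λ ∈ ℂ with |λ| = 1, and let f, g ∈ H satisfy f = g + λ·S(f) and ⟨Sⁿ g, g⟩ = 0 for every integer n ≥ 1. Then g = 0. -/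
/-!
Put `T = λS`, again a linear isometry, so that `f = g + T f` and `⟪Tⁿ g, g⟫ = 0` for `n ≥ 1`.
Since `T` preserves inner products, the vectors `Tᵏ g` are pairwise orthogonal of norm `‖g‖`, and
telescoping gives `∑_{k<N} Tᵏ g = f - Tᴺ f`. Pythagoras then yields `N ‖g‖² ≤ (2‖f‖)²` for all `N`.
-/

open scoped InnerProductSpace

open Finset

theorem Module.End.eq_sum_range_pow_apply_add_pow_apply {R M : Type*} [Semiring R]
    [AddCommMonoid M] [Module R M] {T : Module.End R M} {f g : M} (hf : f = g + T f) (N : ℕ) :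
    f = ∑ k ∈ range N, (T ^ k) g + (T ^ N) f := by
  induction N with
  | zero => simp
  | succ N ih =>
    have hstep : (T ^ N) f = (T ^ N) g + (T ^ (N + 1)) f := by
      conv_lhs => rw [hf]
      rw [map_add, pow_succ, Module.End.mul_apply]
    rw [sum_range_succ, add_assoc, ← hstep]
    exact ih

section InnerProductSpace

variable {𝕜 E : Type*} [RCLike 𝕜] [NormedAddCommGroup E] [InnerProductSpace 𝕜 E]

theorem norm_sum_range_sq_of_pairwise_inner_eq_zero {u : ℕ → E}
    (hu : Pairwise fun j k => ⟪u j, u k⟫_𝕜 = 0) (N : ℕ) :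
    ‖∑ k ∈ range N, u k‖ ^ 2 = ∑ k ∈ range N, ‖u k‖ ^ 2 := by
  induction N with
  | zero => simp
  | succ N ih =>
    have hperp : ⟪∑ k ∈ range N, u k, u N⟫_𝕜 = 0 := by
      rw [sum_inner]
      exact sum_eq_zero fun k hk => hu (mem_range.mp hk).ne
    rw [sum_range_succ, sum_range_succ, norm_add_sq (𝕜 := 𝕜), hperp, ih, map_zero, mul_zero,
      add_zero]

namespace LinearIsometry

theorem toLinearMap_pow (T : E →ₗᵢ[𝕜] E) (n : ℕ) : T.toLinearMap ^ n = (T ^ n).toLinearMap := by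
  ext x
  simp only [Module.End.pow_apply, coe_toLinearMap, coe_pow]

theorem mul_apply (S T : E →ₗᵢ[𝕜] E) (x : E) : (S * T) x = S (T x) := rfl

def smulOfNormEqOne (c : 𝕜) (hc : ‖c‖ = 1) (T : E →ₗᵢ[𝕜] E) : E →ₗᵢ[𝕜] E where
  toLinearMap := c • T.toLinearMap
  norm_map' x := by simp [norm_smul, hc]

theorem smulOfNormEqOne_apply (c : 𝕜) (hc : ‖c‖ = 1) (T : E →ₗᵢ[𝕜] E) (x : E) :
    smulOfNormEqOne c hc T x = c • T x := rfl

theorem smulOfNormEqOne_pow_apply (c : 𝕜) (hc : ‖c‖ = 1) (T : E →ₗᵢ[𝕜] E) (n : ℕ) (x : E) :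
    (smulOfNormEqOne c hc T ^ n) x = c ^ n • (T ^ n) x := by
  induction n generalizing x with
  | zero => simp
  | succ n ih =>
    rw [pow_succ, mul_apply, ih, smulOfNormEqOne_apply, map_smul, smul_smul, pow_succ T,
      mul_apply, ← pow_succ]

theorem pairwise_inner_pow_apply_eq_zero (T : E →ₗᵢ[𝕜] E) {g : E}
    (h : ∀ n : ℕ, 1 ≤ n → ⟪(T ^ n) g, g⟫_𝕜 = 0) :
    Pairwise fun j k => ⟪(T ^ j) g, (T ^ k) g⟫_𝕜 = 0 := by
  have hlt : ∀ j k : ℕ, j < k → ⟪(T ^ j) g, (T ^ k) g⟫_𝕜 = 0 := by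
    intro j k hjk
    obtain ⟨d, rfl⟩ := Nat.exists_eq_add_of_lt hjk
    rw [add_assoc, pow_add, mul_apply, inner_map_map, inner_eq_zero_symm]
    exact h (d + 1) le_add_self
  intro j k hjk
  rcases hjk.lt_or_gt with hjk | hkj
  · exact hlt j k hjk
  · exact inner_eq_zero_symm.mp (hlt k j hkj)

theorem eq_zero_of_eq_add_apply_of_inner_pow_apply_eq_zero (T : E →ₗᵢ[𝕜] E) {f g : E}
    (hf : f = g + T f) (h : ∀ n : ℕ, 1 ≤ n → ⟪(T ^ n) g, g⟫_𝕜 = 0) : g = 0 := by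
  have hbound : ∀ N : ℕ, N * ‖g‖ ^ 2 ≤ (2 * ‖f‖) ^ 2 := by
    intro N
    have hsum : ∑ k ∈ range N, (T ^ k) g = f - (T ^ N) f := by
      have := Module.End.eq_sum_range_pow_apply_add_pow_apply (T := T.toLinearMap) hf N
      simp only [toLinearMap_pow, coe_toLinearMap] at this
      exact eq_sub_of_add_eq this.symm
    calc (N : ℝ) * ‖g‖ ^ 2 = ‖∑ k ∈ range N, (T ^ k) g‖ ^ 2 := by
          rw [norm_sum_range_sq_of_pairwise_inner_eq_zero (pairwise_inner_pow_apply_eq_zero T h)]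
          simp
      _ ≤ (‖f‖ + ‖(T ^ N) f‖) ^ 2 := by
          rw [hsum]
          gcongr
          exact norm_sub_le _ _
      _ = (2 * ‖f‖) ^ 2 := by rw [norm_map, two_mul]
  by_contra hg
  have hg2 : 0 < ‖g‖ ^ 2 := by positivity
  obtain ⟨N, hN⟩ := exists_nat_gt ((2 * ‖f‖) ^ 2 / ‖g‖ ^ 2)
  exact (hbound N).not_gt ((div_lt_iff₀ hg2).mp hN)

end LinearIsometry

end InnerProductSpace

theorem vanishing_from_shift_orthogonality
    {H : Type*} [NormedAddCommGroup H] [InnerProductSpace ℂ H]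
    (S : H →ₗᵢ[ℂ] H) (lam : ℂ) (hlam : ‖lam‖ = 1)
    (f g : H) (hf : f = g + lam • S f)
    (horth : ∀ n : ℕ, 1 ≤ n → ⟪(S.toLinearMap ^ n) g, g⟫_ℂ = 0) :
    g = 0 := by
  refine (S.smulOfNormEqOne lam hlam).eq_zero_of_eq_add_apply_of_inner_pow_apply_eq_zero hf
    fun n hn => ?_
  rw [LinearIsometry.smulOfNormEqOne_pow_apply, inner_smul_left, ← LinearIsometry.coe_toLinearMap,
    ← LinearIsometry.toLinearMap_pow, horth n hn, mul_zero]
end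

section
/- Let d ≥ 1, let Π^d = {z ∈ ℂ^d : Im(z_j) > 0 for all j} be the poly upper half-plane, and let C ⊆ (0, ∞)^d be a nonempty open cone in ℝ^d (i.e., C is open in ℝ^d and tx ∈ C whenever x ∈ C and t > 0), regarded as a subset of ℂ^d via the standard inclusion ℝ^d ⊆ ℂ^d. Let Ω ⊆ ℂ^d be an open set with Π^d ∪ C ⊆ Ω, and let f be analytic (holomorphic) on Ω. If f(tx) = t·f(x) for every x ∈ C and every t > 0, then f(tz) = t·f(z) for every z ∈ Π^d and every t > 0. -/
open Complex

/-- The poly upper half-plane in `ℂ^d`. -/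
def polyUpperHalfPlane (d : ℕ) : Set (Fin d → ℂ) :=
  {z | ∀ j, 0 < (z j).im}

/-- The standard inclusion of `ℝ^d` into `ℂ^d`. -/
def realInclusion {d : ℕ} (x : Fin d → ℝ) : Fin d → ℂ := fun j => (x j : ℂ)

/-!
For fixed `t > 0`, `z ↦ f (t • z)` and `z ↦ t * f z` are analytic near `Π^d ∪ C` and agree on the
open real set `C`. Slicing by complex lines `w ↦ x + w • y` with `x, y` real and using the
one-variable identity theorem, they agree on a polydisc around a point of `C`; this polydisc meets
`Π^d`, and the union of the two convex sets is connected, so the several-variable identity theorem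
gives agreement on all of `Π^d`.
-/

open Set Filter Topology Metric

lemma isometry_realInclusion (d : ℕ) : Isometry (realInclusion (d := d)) :=
  Isometry.piMap (fun _ => ((↑) : ℝ → ℂ)) fun _ => isometry_ofReal

lemma realInclusion_add_smul {d : ℕ} (x y : Fin d → ℝ) (t : ℝ) :
    realInclusion (x + t • y) = realInclusion x + (t : ℂ) • realInclusion y := by
  ext j; simp [realInclusion]

lemma realInclusion_smul {d : ℕ} (t : ℝ) (x : Fin d → ℝ) :
    realInclusion (t • x) = (t : ℂ) • realInclusion x := by
  ext j; simp [realInclusion]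

lemma dist_re_le_dist_realInclusion {d : ℕ} (z : Fin d → ℂ) (x : Fin d → ℝ) :
    dist (fun j => (z j).re) x ≤ dist z (realInclusion x) := by
  refine dist_pi_le_iff dist_nonneg |>.2 fun j => ?_
  calc dist (z j).re (x j) = |(z j - x j).re| := by simp [Real.dist_eq]
    _ ≤ ‖z j - x j‖ := abs_re_le_norm _
    _ = dist (z j) (realInclusion x j) := (dist_eq_norm _ _).symm
    _ ≤ dist z (realInclusion x) := dist_le_pi_dist z (realInclusion x) j

lemma polyUpperHalfPlane_eq_iInter (d : ℕ) :
    polyUpperHalfPlane d = ⋂ j, (fun z : Fin d → ℂ => (z j).im) ⁻¹' Ioi 0 := by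
  ext; simp [polyUpperHalfPlane]

lemma convex_polyUpperHalfPlane (d : ℕ) : Convex ℝ (polyUpperHalfPlane d) := by
  rw [polyUpperHalfPlane_eq_iInter]
  exact convex_iInter fun j =>
    (convex_Ioi 0).linear_preimage (imLm.comp (LinearMap.proj (R := ℝ) (φ := fun _ => ℂ) j))

lemma smul_mem_polyUpperHalfPlane {d : ℕ} {z : Fin d → ℂ} (hz : z ∈ polyUpperHalfPlane d)
    {t : ℝ} (ht : 0 < t) : (t : ℂ) • z ∈ polyUpperHalfPlane d := fun j => by
  simpa using mul_pos ht (hz j)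

lemma eqOn_ball_of_forall_realInclusion_eq {d : ℕ} {f g : (Fin d → ℂ) → ℂ} {x₀ : Fin d → ℝ}
    {r : ℝ}    (hf : AnalyticOnNhd ℂ f (ball (realInclusion x₀) r))
    (hg : AnalyticOnNhd ℂ g (ball (realInclusion x₀) r))
    (hfg : ∀ x ∈ ball x₀ r, f (realInclusion x) = g (realInclusion x)) :
    EqOn f g (ball (realInclusion x₀) r) := by
  -- Restrict to the complex line `w ↦ Re z + w • Im z`: it meets `z` at `w = I` and is real on
  -- the real axis, so the one-variable identity theorem applies to the slice.
  intro z hz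
  set a : Fin d → ℝ := fun j => (z j).re
  set b : Fin d → ℝ := fun j => (z j).im
  set L : ℂ → Fin d → ℂ := fun w => realInclusion a + w • realInclusion b
  have hLI : L I = z := by ext j; simp [L, a, b, realInclusion, mul_comm I, re_add_im]
  have hLre (u : ℝ) : L u = realInclusion (a + u • b) := (realInclusion_add_smul a b u).symm
  have ha : a ∈ ball x₀ r := (dist_re_le_dist_realInclusion z x₀).trans_lt hz
  have hD : IsPreconnected (L ⁻¹' ball (realInclusion x₀) r) := by
    have hlin : IsLinearMap ℝ (fun w : ℂ => w • realInclusion b) :=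
      ⟨fun v w => add_smul v w _, fun c w => smul_assoc c w _⟩
    have := ((convex_ball (realInclusion x₀) r).translate_preimage_right
      (realInclusion a)).is_linear_preimage hlin
    exact this.isPreconnected
  have hL : AnalyticOnNhd ℂ L univ := fun w _ =>
    analyticAt_const.add (analyticAt_id.smul analyticAt_const)
  have hmaps : MapsTo L (L ⁻¹' ball (realInclusion x₀) r) (ball (realInclusion x₀) r) :=
    fun _ hw => hw
  have hreal : ∀ᶠ u : ℝ in 𝓝 0, f (L u) = g (L u) := by
    have hcont : Continuous fun u : ℝ => a + u • b := by fun_prop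
    filter_upwards [(hcont.tendsto' 0 a (by simp)).eventually (isOpen_ball.eventually_mem ha)]
      with u hu
    rw [hLre]
    exact hfg _ hu
  have hofReal : Tendsto ((↑) : ℝ → ℂ) (𝓝[≠] 0) (𝓝[≠] 0) := by
    simpa using continuous_ofReal.continuousWithinAt.tendsto_nhdsWithin (x := 0)
      fun _ => ofReal_ne_zero.mpr
  have hfreq : ∃ᶠ w in 𝓝[≠] (0 : ℂ), f (L w) = g (L w) :=
    hofReal.frequently (hreal.filter_mono nhdsWithin_le_nhds).frequently
  have h0 : (0 : ℂ) ∈ L ⁻¹' ball (realInclusion x₀) r := by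
    rw [mem_preimage, ← ofReal_zero, hLre, zero_smul, add_zero,
      ← mem_preimage, (isometry_realInclusion d).preimage_ball]
    exact ha
  have hI : I ∈ L ⁻¹' ball (realInclusion x₀) r := by simpa [mem_preimage, hLI] using hz
  simpa [hLI] using (hf.comp (hL.mono (subset_univ _)) hmaps).eqOn_of_preconnected_of_frequently_eq
    (hg.comp (hL.mono (subset_univ _)) hmaps) hD h0 hfreq hI

lemma polyUpperHalfPlane_inter_ball_nonempty {d : ℕ} (x : Fin d → ℝ) {r : ℝ} (hr : 0 < r) :
    (polyUpperHalfPlane d ∩ ball (realInclusion x) r).Nonempty := by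
  refine ⟨realInclusion x + fun _ => (r / 2 : ℝ) * I, fun _ => by simpa [realInclusion] using hr,
    ?_⟩
  rw [mem_ball, dist_self_add_left, pi_norm_lt_iff hr]
  intro j
  rw [norm_mul, norm_I, mul_one, norm_real, Real.norm_of_nonneg (by positivity)]
  linarith

lemma eqOn_polyUpperHalfPlane_of_forall_realInclusion_eq {d : ℕ} {C : Set (Fin d → ℝ)}
    (hCne : C.Nonempty) (hCopen : IsOpen C) {U : Set (Fin d → ℂ)} (hU : IsOpen U)
    (hCU : polyUpperHalfPlane d ∪ realInclusion '' C ⊆ U) {f g : (Fin d → ℂ) → ℂ}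
    (hf : AnalyticOnNhd ℂ f U) (hg : AnalyticOnNhd ℂ g U)
    (hfg : ∀ x ∈ C, f (realInclusion x) = g (realInclusion x)) :
    EqOn f g (polyUpperHalfPlane d) := by
  obtain ⟨x₀, hx₀⟩ := hCne
  obtain ⟨r₁, hr₁, hr₁C⟩ := Metric.isOpen_iff.1 hCopen x₀ hx₀
  obtain ⟨r₂, hr₂, hr₂U⟩ := Metric.isOpen_iff.1 hU _ (hCU (Or.inr (mem_image_of_mem _ hx₀)))
  set r := min r₁ r₂
  have hrC : ball x₀ r ⊆ C := (ball_subset_ball (min_le_left _ _)).trans hr₁C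
  have hrU : ball (realInclusion x₀) r ⊆ U := (ball_subset_ball (min_le_right _ _)).trans hr₂U
  have hball : EqOn f g (ball (realInclusion x₀) r) :=
    eqOn_ball_of_forall_realInclusion_eq (hf.mono hrU) (hg.mono hrU) fun x hx => hfg x (hrC hx)
  obtain ⟨p, hpH, hpball⟩ := polyUpperHalfPlane_inter_ball_nonempty x₀ (lt_min hr₁ hr₂)
  have hconn : IsPreconnected (polyUpperHalfPlane d ∪ ball (realInclusion x₀) r) :=
    (convex_polyUpperHalfPlane d).isPreconnected.union p hpH hpball
      (convex_ball _ _).isPreconnected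
  have hsub : polyUpperHalfPlane d ∪ ball (realInclusion x₀) r ⊆ U :=
    union_subset (subset_union_left.trans hCU) hrU
  exact ((hf.mono hsub).eqOn_of_preconnected_of_eventuallyEq (hg.mono hsub) hconn
    (Or.inr hpball) (hball.eventuallyEq_of_mem (isOpen_ball.mem_nhds hpball))).mono
    subset_union_left

theorem homogeneity_extends_to_polyUpperHalfPlane_general
    (d : ℕ)
    (C : Set (Fin d → ℝ)) (hCne : C.Nonempty) (hCopen : IsOpen C)
    (hCcone : ∀ x ∈ C, ∀ t : ℝ, 0 < t → t • x ∈ C)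
    (Ω : Set (Fin d → ℂ)) (hΩopen : IsOpen Ω)
    (hΩsub : polyUpperHalfPlane d ∪ realInclusion '' C ⊆ Ω)
    (f : (Fin d → ℂ) → ℂ) (hf : AnalyticOnNhd ℂ f Ω)
    (hhom : ∀ x ∈ C, ∀ t : ℝ, 0 < t → f (realInclusion (t • x)) = t * f (realInclusion x)) :
    ∀ z ∈ polyUpperHalfPlane d, ∀ t : ℝ, 0 < t → f ((t : ℂ) • z) = t * f z := by
  intro z hz t ht
  set U := Ω ∩ (fun w => (t : ℂ) • w) ⁻¹' Ω
  have hU : IsOpen U := hΩopen.inter (hΩopen.preimage (continuous_const_smul _))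
  have hCU : polyUpperHalfPlane d ∪ realInclusion '' C ⊆ U := by
    rintro _ (hw | ⟨x, hx, rfl⟩)
    · exact ⟨hΩsub (Or.inl hw), hΩsub (Or.inl (smul_mem_polyUpperHalfPlane hw ht))⟩
    · refine ⟨hΩsub (Or.inr ⟨x, hx, rfl⟩), hΩsub (Or.inr ⟨t • x, hCcone x hx t ht, ?_⟩)⟩
      exact realInclusion_smul t x
  have hscaled : AnalyticOnNhd ℂ (fun w => f ((t : ℂ) • w)) U := fun w hw =>
    (hf _ hw.2).comp analyticAt_id.fun_const_smul
  have hmul : AnalyticOnNhd ℂ (fun w => t * f w) U := fun w hw =>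
    analyticAt_const.mul (hf w hw.1)
  refine eqOn_polyUpperHalfPlane_of_forall_realInclusion_eq hCne hCopen hU hCU hscaled hmul
    (fun x hx => ?_) hz
  simpa [realInclusion_smul] using hhom x hx t ht

theorem homogeneity_extends_to_polyUpperHalfPlane
    (d : ℕ) (hd : 1 ≤ d)
    (C : Set (Fin d → ℝ)) (hCne : C.Nonempty) (hCopen : IsOpen C)
    (hCpos : ∀ x ∈ C, ∀ j, 0 < x j)
    (hCcone : ∀ x ∈ C, ∀ t : ℝ, 0 < t → t • x ∈ C)
    (Ω : Set (Fin d → ℂ)) (hΩopen : IsOpen Ω)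
    (hΩsub : polyUpperHalfPlane d ∪ realInclusion '' C ⊆ Ω)
    (f : (Fin d → ℂ) → ℂ) (hf : AnalyticOnNhd ℂ f Ω)
    (hhom : ∀ x ∈ C, ∀ t : ℝ, 0 < t → f (realInclusion (t • x)) = t * f (realInclusion x)) :
    ∀ z ∈ polyUpperHalfPlane d, ∀ t : ℝ, 0 < t → f ((t : ℂ) • z) = t * f z :=
  homogeneity_extends_to_polyUpperHalfPlane_general d C hCne hCopen hCcone Ω hΩopen hΩsub f hf hhom
end
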